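/- Let G be a countable discrete abelian group acting by multiplication by characters on H = L²(F, λ|_F). Let w ∈ H be a Bessel vector (i.e. |w| is essentially bounded) and v ∈ H a frame vector for this representation. Then the range of the analysis operator Θ_w is contained in the range of the analysis operator Θ_v in ℓ²(G). -/

import Mathlib

open MeasureTheory ComplexConjugate

/-! On `F` the frame bound keeps `|v|` away from `0`, so `h' := h w̄ / v̄` lies in `L²` because
`|h'| ≤ (‖w‖_∞ / √C₁) |h|`, and `h' v̄ = h w̄` a.e. Hence `Θ_v h' = Θ_w h`: the analysis
coefficients `⟨h, χ_g w⟩ = ∫ h w̄ χ̄_g` depend on `h` and `w` only through `h w̄`. -/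

section
variable {X 𝕜 : Type*} [MeasurableSpace X] [RCLike 𝕜] {μ : Measure X}

lemma mul_conj_div_conj_mul_conj {a b c : 𝕜} (hc : a ≠ 0 → c ≠ 0) :
    a * conj b / conj c * conj c = a * conj b := by
  by_cases ha : a = 0
  · simp [ha]
  · exact div_mul_cancel₀ _ ((map_ne_zero _).2 (hc ha))

lemma norm_mul_conj_div_conj_le {a b c : 𝕜} {B r : ℝ} (hr : 0 < r) (hb : ‖b‖ ≤ B)
    (hc : a ≠ 0 → r ≤ ‖c‖) : ‖a * conj b / conj c‖ ≤ B / r * ‖a‖ := by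
  by_cases ha : a = 0
  · simp [ha]
  have hcr : r ≤ ‖c‖ := hc ha
  have hB : 0 ≤ B := (norm_nonneg b).trans hb
  rw [norm_div, norm_mul, RCLike.norm_conj, RCLike.norm_conj,
    div_le_iff₀ (hr.trans_le hcr)]
  calc ‖a‖ * ‖b‖ ≤ ‖a‖ * B := by gcongr
    _ = B / r * ‖a‖ * r := by field_simp
    _ ≤ B / r * ‖a‖ * ‖c‖ := by gcongr

theorem MeasureTheory.MemLp.mul_conj_div_conj {p : ENNReal} {h w v : X → 𝕜} {B r : ℝ} (hh : MemLp h p μ)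
    (hw : AEStronglyMeasurable w μ) (hv : AEStronglyMeasurable v μ) (hr : 0 < r)
    (hwB : ∀ᵐ t ∂μ, ‖w t‖ ≤ B) (hvr : ∀ᵐ t ∂μ, h t ≠ 0 → r ≤ ‖v t‖) :
    MemLp (fun t => h t * conj (w t) / conj (v t)) p μ :=
  hh.of_le_mul ((hh.1.mul hw.star).div₀ hv.star) <| by
    filter_upwards [hwB, hvr] with t hwt hvt
    exact norm_mul_conj_div_conj_le hr hwt hvt

theorem integral_mul_conj_div_conj_mul_conj {h w v χ : X → 𝕜}
    (hv : ∀ᵐ t ∂μ, h t ≠ 0 → v t ≠ 0) :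
    ∫ t, h t * conj (w t) / conj (v t) * conj (χ t * v t) ∂μ = ∫ t, h t * conj (χ t * w t) ∂μ := by
  refine integral_congr_ae ?_
  filter_upwards [hv] with t hvt
  calc h t * conj (w t) / conj (v t) * conj (χ t * v t)
      = h t * conj (w t) / conj (v t) * conj (v t) * conj (χ t) := by rw [map_mul]; ring
    _ = h t * conj (χ t * w t) := by rw [mul_conj_div_conj_mul_conj hvt, map_mul]; ring

end

theorem stmt7 {G X : Type*} [MeasurableSpace X]
    (μ : Measure X)
    (χ : G → X → ℂ)
    (F : Set X)
    (w v : X → ℂ) (hw : MemLp w 2 μ) (hv : MemLp v 2 μ)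
    -- w is a Bessel vector: |w| essentially bounded
    (hwB : ∃ C : ℝ, ∀ᵐ t ∂μ, ‖w t‖ ≤ C)
    -- v is a frame vector: 0 < C₁ ≤ |v|² ≤ C₂ a.e. on F
    (hvframe : ∃ C₁ C₂ : ℝ, 0 < C₁ ∧ C₁ ≤ C₂ ∧
      ∀ᵐ t ∂(μ.restrict F), C₁ ≤ ‖v t‖ ^ 2 ∧ ‖v t‖ ^ 2 ≤ C₂) :
    {a : G → ℂ | ∃ h : X → ℂ, MemLp h 2 μ ∧ (∀ᵐ t ∂μ, t ∉ F → h t = 0) ∧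
        a = fun g => ∫ t, h t * conj (χ g t * w t) ∂μ} ⊆
      {a : G → ℂ | ∃ h : X → ℂ, MemLp h 2 μ ∧ (∀ᵐ t ∂μ, t ∉ F → h t = 0) ∧
        a = fun g => ∫ t, h t * conj (χ g t * v t) ∂μ} := by
  rintro a ⟨h, hh, hhF, rfl⟩
  obtain ⟨B, hB⟩ := hwB
  obtain ⟨C₁, _, hC₁, _, hframe⟩ := hvframe
  have hvr : ∀ᵐ t ∂μ, h t ≠ 0 → √C₁ ≤ ‖v t‖ := by
    filter_upwards [ae_imp_of_ae_restrict hframe, hhF] with t hvt hht hne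
    have htF : t ∈ F := not_not.1 (mt hht hne)
    exact (Real.sqrt_le_sqrt (hvt htF).1).trans_eq (Real.sqrt_sq (norm_nonneg _))
  refine ⟨_, hh.mul_conj_div_conj hw.1 hv.1 (Real.sqrt_pos.2 hC₁) hB hvr, ?_, ?_⟩
  · filter_upwards [hhF] with t ht htF
    simp [ht htF]
  · funext g
    refine (integral_mul_conj_div_conj_mul_conj ?_).symm
    filter_upwards [hvr] with t ht hne
    exact norm_pos_iff.1 ((Real.sqrt_pos.2 hC₁).trans_le (ht hne))
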